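/- Theorem (marginal independence characterization): for a vector X_V of binary variables with strictly positive distribution and disjoint nonempty proper subsets A, B of V, X_A ⫫ X_B if and only if γ_{A'∪B'} = 0 for every nonempty A' ⊆ A and nonempty B' ⊆ B, where γ is the log-mean linear parameter. -/

import Mathlib

open Finset

/-- Probability that the subvector `X_A` shows the cell pattern `i ⊆ A`
(coordinates in `i` equal to 1, coordinates in `A \ i` equal to 0), for a
binary random vector whose joint distribution on `{0,1}^V` is encoded by the
vector `π` indexed by subsets of `V`. -/
def cellProb {V : Type*} [Fintype V] [DecidableEq V]
    (π : Finset V → ℝ) (A i : Finset V) : ℝ :=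
  ∑ H ∈ univ.powerset.filter (fun H => H ∩ A = i), π H

/-- The mean parameter: `μ_D = P(X_D = 1_D)`. -/
def mu {V : Type*} [Fintype V] [DecidableEq V]
    (π : Finset V → ℝ) (D : Finset V) : ℝ :=
  ∑ H ∈ univ.powerset.filter (fun H => D ⊆ H), π H

/-- The log-mean linear parameter `γ_D = Σ_{E ⊆ D} (-1)^{|D\E|} log μ_E`. -/
noncomputable def gam {V : Type*} [Fintype V] [DecidableEq V]
    (π : Finset V → ℝ) (D : Finset V) : ℝ :=
  ∑ E ∈ D.powerset, (-1 : ℝ) ^ (D \ E).card * Real.log (mu π E)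

/-!
Both conditions are statements about the mean parameters. Möbius inversion on the Boolean
lattice writes each cell probability of `X_{A ∪ B}` as a signed sum of `μ` over supersets, and
the subsets of `A ∪ B` form the product of the lattices of subsets of `A` and of `B`; so
independence is equivalent to `μ_{Ea ∪ Eb} = μ_{Ea} μ_{Eb}` for all `Ea ⊆ A`, `Eb ⊆ B`, that is,
to additivity of `log μ` across `A` and `B`. Since `log μ_D = ∑_{E ⊆ D} γ_E`, that additivity
holds exactly when `γ` vanishes on every set meeting both `A` and `B`.
-/

theorem sum_Icc_sum_Icc_comm {α M : Type*} [Preorder α] [LocallyFiniteOrder α] [AddCommMonoid M]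
    (a b : α) (f : α → α → M) :
    ∑ x ∈ Icc a b, ∑ y ∈ Icc x b, f x y = ∑ y ∈ Icc a b, ∑ x ∈ Icc a y, f x y :=
  sum_comm' fun x y => by
    simp only [mem_Icc]
    exact ⟨fun h => ⟨⟨h.1.1, h.2.1⟩, h.1.1.trans h.2.1, h.2.2⟩,
      fun h => ⟨⟨h.1.1, h.1.2.trans h.2.2⟩, h.1.2, h.2.2⟩⟩

section Subsets

variable {V R : Type*} [DecidableEq V] [CommRing R]

theorem powerset_eq_Icc_empty (s : Finset V) : s.powerset = Icc ∅ s := by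
  ext
  simp

theorem sum_powerset_neg_one_pow_card_sdiff (s : Finset V) :
    ∑ t ∈ s.powerset, (-1 : R) ^ #(s \ t) = if s = ∅ then 1 else 0 := by
  have := prod_add (fun _ => (1 : R)) (fun _ => -1) s
  simp only [add_neg_cancel, prod_const, one_pow, one_mul, zero_pow_eq, card_eq_zero] at this
  exact this.symm

theorem sum_Icc_neg_one_pow_card_sdiff (i j : Finset V) :
    ∑ E ∈ Icc i j, (-1 : R) ^ #(E \ i) = if i = j then 1 else 0 := by
  by_cases hij : i ⊆ j
  · have hdisj : ∀ F ∈ (j \ i).powerset, Disjoint i F := fun F hF =>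
      (disjoint_sdiff.mono_right (mem_powerset.1 hF))
    rw [Icc_eq_image_powerset hij, sum_image fun F hF G hG hFG => by
      rw [← union_sdiff_cancel_left (hdisj F hF), hFG, union_sdiff_cancel_left (hdisj G hG)]]
    rw [sum_congr rfl fun F hF => by rw [union_sdiff_cancel_left (hdisj F hF)]]
    have := congrArg (Int.cast : ℤ → R) (sum_powerset_neg_one_pow_card (x := j \ i))
    push_cast at this
    rw [this]
    exact if_congr ⟨fun h => hij.antisymm (sdiff_eq_empty_iff_subset.1 h), fun h => by simp [h]⟩
      rfl rfl
  · rw [Icc_eq_empty hij, sum_empty, if_neg (fun h => hij h.le)]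

theorem card_union_sdiff_union {Da Db ia ib : Finset V} (h : Disjoint (Da ∪ ia) (Db ∪ ib)) :
    #((Da ∪ Db) \ (ia ∪ ib)) = #(Da \ ia) + #(Db \ ib) := by
  rw [← card_union_of_disjoint
    (h.mono (sdiff_subset.trans subset_union_left) (sdiff_subset.trans subset_union_left))]
  congr 1
  ext x
  have hx : x ∈ Da ∪ ia → x ∉ Db ∪ ib := fun hx => disjoint_left.1 h hx
  simp only [mem_sdiff, mem_union] at hx ⊢
  tauto

theorem sum_Icc_union_union {M : Type*} [AddCommMonoid M] {A B ia ib : Finset V}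
    (hAB : Disjoint A B) (hia : ia ⊆ A) (hib : ib ⊆ B) (f : Finset V → M) :
    ∑ D ∈ Icc (ia ∪ ib) (A ∪ B), f D = ∑ Da ∈ Icc ia A, ∑ Db ∈ Icc ib B, f (Da ∪ Db) := by
  rw [← sum_product']
  have hAB' := disjoint_left.1 hAB
  refine sum_nbij' (fun D => (D ∩ A, D ∩ B)) (fun p => p.1 ∪ p.2) ?_ ?_ ?_ ?_
    fun D hD => by rw [← inter_union_distrib_left, inter_eq_left.2 (mem_Icc.1 hD).2]
  all_goals
    intro D hD
    simp only [mem_Icc, mem_product, subset_iff, Finset.ext_iff, mem_union, mem_inter,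
      Prod.ext_iff] at hD hia hib ⊢
    grind

theorem sum_powerset_union {M : Type*} [AddCommMonoid M] {A B : Finset V} (hAB : Disjoint A B)
    (f : Finset V → M) :
    ∑ D ∈ (A ∪ B).powerset, f D = ∑ Da ∈ A.powerset, ∑ Db ∈ B.powerset, f (Da ∪ Db) := by
  simpa only [empty_union, ← powerset_eq_Icc_empty] using
    sum_Icc_union_union hAB (empty_subset A) (empty_subset B) f

theorem sum_Icc_union_union_eq_mul {A B ia ib : Finset V} (hAB : Disjoint A B) (hia : ia ⊆ A)
    (hib : ib ⊆ B) {f fa fb : Finset V → R}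
    (hf : ∀ Da ⊆ A, ∀ Db ⊆ B, f (Da ∪ Db) = fa Da * fb Db) :
    ∑ D ∈ Icc (ia ∪ ib) (A ∪ B), f D = (∑ Da ∈ Icc ia A, fa Da) * ∑ Db ∈ Icc ib B, fb Db := by
  rw [sum_Icc_union_union hAB hia hib, sum_mul_sum]
  exact sum_congr rfl fun Da hDa => sum_congr rfl fun Db hDb =>
    hf Da (mem_Icc.1 hDa).2 Db (mem_Icc.1 hDb).2

theorem sum_Icc_neg_one_pow_mul_sum_Icc {i k : Finset V} (hik : i ⊆ k) (f : Finset V → R) :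
    ∑ D ∈ Icc i k, (-1) ^ #(D \ i) * ∑ j ∈ Icc D k, f j = f i := by
  simp_rw [mul_sum]
  rw [sum_Icc_sum_Icc_comm]
  simp_rw [← sum_mul, sum_Icc_neg_one_pow_card_sdiff, ite_mul, one_mul, zero_mul]
  simp [hik]

def subsetMoebius (g : Finset V → R) (D : Finset V) : R :=
  ∑ E ∈ D.powerset, (-1) ^ #(D \ E) * g E

@[simp]
theorem subsetMoebius_empty (g : Finset V → R) : subsetMoebius g ∅ = g ∅ := by
  simp [subsetMoebius]

theorem sum_powerset_subsetMoebius (g : Finset V → R) (D : Finset V) :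
    ∑ F ∈ D.powerset, subsetMoebius g F = g D := by
  simp_rw [subsetMoebius, powerset_eq_Icc_empty]
  rw [← sum_Icc_sum_Icc_comm]
  simp_rw [← sum_mul, sum_Icc_neg_one_pow_card_sdiff, ite_mul, one_mul, zero_mul]
  simp

theorem subsetMoebius_union_eq_zero {A B : Finset V} (hAB : Disjoint A B) (hA : A.Nonempty)
    (hB : B.Nonempty) {g : Finset V → R}
    (hg : ∀ Ea ⊆ A, ∀ Eb ⊆ B, g (Ea ∪ Eb) = g Ea + g Eb) :
    subsetMoebius g (A ∪ B) = 0 := by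
  have hterm : ∀ Ea ∈ A.powerset, ∀ Eb ∈ B.powerset,
      (-1 : R) ^ #((A ∪ B) \ (Ea ∪ Eb)) * g (Ea ∪ Eb) =
        (-1) ^ #(A \ Ea) * g Ea * (-1) ^ #(B \ Eb) +
          (-1) ^ #(A \ Ea) * ((-1) ^ #(B \ Eb) * g Eb) := by
    intro Ea hEa Eb hEb
    rw [mem_powerset] at hEa hEb
    rw [card_union_sdiff_union (hAB.mono (union_subset subset_rfl hEa)
      (union_subset subset_rfl hEb)), pow_add, hg Ea hEa Eb hEb]
    ring
  rw [subsetMoebius, sum_powerset_union hAB,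
    sum_congr rfl fun Ea hEa => sum_congr rfl (hterm Ea hEa)]
  -- each of the two terms contains a full alternating sum over a nonempty powerset
  simp only [sum_add_distrib, ← sum_mul_sum, sum_powerset_neg_one_pow_card_sdiff,
    hA.ne_empty, hB.ne_empty, if_false, mul_zero, zero_mul, add_zero]

theorem union_eq_add_of_subsetMoebius_eq_zero {A B : Finset V} (hAB : Disjoint A B)
    {g : Finset V → R} (hg : g ∅ = 0)
    (hm : ∀ A' ⊆ A, ∀ B' ⊆ B, A'.Nonempty → B'.Nonempty → subsetMoebius g (A' ∪ B') = 0) :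
    g (A ∪ B) = g A + g B := by
  have hterm : ∀ Ea ∈ A.powerset, ∀ Eb ∈ B.powerset, subsetMoebius g (Ea ∪ Eb) =
      (if Eb = ∅ then subsetMoebius g Ea else 0) + if Ea = ∅ then subsetMoebius g Eb else 0 := by
    intro Ea hEa Eb hEb
    rw [mem_powerset] at hEa hEb
    rcases Ea.eq_empty_or_nonempty with rfl | hEa'
    · by_cases hEb' : Eb = ∅ <;> simp [hEb', hg]
    · rcases Eb.eq_empty_or_nonempty with rfl | hEb'
      · simp [hEa'.ne_empty]
      · simp [hm Ea hEa Eb hEb hEa' hEb', hEa'.ne_empty, hEb'.ne_empty]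
  rw [← sum_powerset_subsetMoebius g (A ∪ B), sum_powerset_union hAB,
    sum_congr rfl fun Ea hEa => sum_congr rfl (hterm Ea hEa)]
  simp [sum_add_distrib, sum_powerset_subsetMoebius]

theorem union_eq_add_iff_subsetMoebius_eq_zero {A B : Finset V} (hAB : Disjoint A B)
    {g : Finset V → R} (hg : g ∅ = 0) :
    (∀ Ea ⊆ A, ∀ Eb ⊆ B, g (Ea ∪ Eb) = g Ea + g Eb) ↔
      ∀ A' ⊆ A, ∀ B' ⊆ B, A'.Nonempty → B'.Nonempty → subsetMoebius g (A' ∪ B') = 0 :=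
  ⟨fun h _ hA' _ hB' hA'ne hB'ne => subsetMoebius_union_eq_zero (hAB.mono hA' hB') hA'ne hB'ne
      fun Ea hEa Eb hEb => h Ea (hEa.trans hA') Eb (hEb.trans hB'),
    fun h _ hEa _ hEb => union_eq_add_of_subsetMoebius_eq_zero (hAB.mono hEa hEb) hg
      fun A' hA' B' hB' => h A' (hA'.trans hEa) B' (hB'.trans hEb)⟩

end Subsets

section BinaryDistribution

variable {V : Type*} [Fintype V] [DecidableEq V] (π : Finset V → ℝ)

theorem mu_eq_sum_cellProb {A D : Finset V} (hDA : D ⊆ A) :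
    mu π D = ∑ i ∈ Icc D A, cellProb π A i := by
  simp only [cellProb, mu, sum_filter]
  rw [sum_comm]
  refine sum_congr rfl fun H _ => ?_
  rw [sum_ite_eq]
  simp [subset_inter_iff, hDA]

theorem cellProb_eq_sum_mu {A i : Finset V} (hiA : i ⊆ A) :
    cellProb π A i = ∑ D ∈ Icc i A, (-1) ^ #(D \ i) * mu π D := by
  rw [← sum_Icc_neg_one_pow_mul_sum_Icc hiA (cellProb π A)]
  exact sum_congr rfl fun D hD => by rw [mu_eq_sum_cellProb π (mem_Icc.1 hD).2]

theorem cellProb_union_eq_mul_iff_mu_union_eq_mul {A B : Finset V} (hAB : Disjoint A B) :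
    (∀ ia ⊆ A, ∀ ib ⊆ B, cellProb π (A ∪ B) (ia ∪ ib) = cellProb π A ia * cellProb π B ib) ↔
      ∀ Ea ⊆ A, ∀ Eb ⊆ B, mu π (Ea ∪ Eb) = mu π Ea * mu π Eb := by
  constructor
  · intro h Ea hEa Eb hEb
    rw [mu_eq_sum_cellProb π (union_subset_union hEa hEb), mu_eq_sum_cellProb π hEa,
      mu_eq_sum_cellProb π hEb]
    exact sum_Icc_union_union_eq_mul hAB hEa hEb h
  · intro h ia hia ib hib
    rw [cellProb_eq_sum_mu π (union_subset_union hia hib), cellProb_eq_sum_mu π hia,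
      cellProb_eq_sum_mu π hib]
    refine sum_Icc_union_union_eq_mul hAB hia hib fun Da hDa Db hDb => ?_
    rw [card_union_sdiff_union (hAB.mono (union_subset hDa hia) (union_subset hDb hib)), pow_add,
      h Da hDa Db hDb]
    ring

theorem mu_pos (hpos : ∀ H, 0 < π H) (D : Finset V) : 0 < mu π D :=
  sum_pos (fun H _ => hpos H) ⟨univ, by simp⟩

theorem mu_empty (hsum : ∑ H ∈ (univ : Finset V).powerset, π H = 1) : mu π ∅ = 1 := by
  simpa [mu] using hsum

theorem gam_eq_subsetMoebius : gam π = subsetMoebius fun E => Real.log (mu π E) := rfl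

end BinaryDistribution

theorem marginal_independence_iff_gamma_zero_general {V : Type*} [Fintype V] [DecidableEq V]
    (π : Finset V → ℝ) (hpos : ∀ H : Finset V, 0 < π H)
    (hsum : ∑ H ∈ (univ : Finset V).powerset, π H = 1)
    (A B : Finset V) (hdisj : Disjoint A B) :
    (∀ ia ⊆ A, ∀ ib ⊆ B,
        cellProb π (A ∪ B) (ia ∪ ib) = cellProb π A ia * cellProb π B ib) ↔
      (∀ A' ⊆ A, ∀ B' ⊆ B, A'.Nonempty → B'.Nonempty → gam π (A' ∪ B') = 0) := by
  have hmu := mu_pos π hpos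
  have hlog : ∀ Ea Eb, mu π (Ea ∪ Eb) = mu π Ea * mu π Eb ↔
      Real.log (mu π (Ea ∪ Eb)) = Real.log (mu π Ea) + Real.log (mu π Eb) := fun Ea Eb => by
    rw [← Real.log_mul (hmu Ea).ne' (hmu Eb).ne',
      Real.log_injOn_pos.eq_iff (hmu _) (mul_pos (hmu Ea) (hmu Eb))]
  rw [cellProb_union_eq_mul_iff_mu_union_eq_mul π hdisj, gam_eq_subsetMoebius]
  simp only [hlog]
  exact union_eq_add_iff_subsetMoebius_eq_zero (g := fun E => Real.log (mu π E)) hdisj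
    (by rw [mu_empty π hsum, Real.log_one])

theorem marginal_independence_iff_gamma_zero {V : Type*} [Fintype V] [DecidableEq V]
    (π : Finset V → ℝ) (hpos : ∀ H : Finset V, 0 < π H)
    (hsum : ∑ H ∈ (univ : Finset V).powerset, π H = 1)
    (A B : Finset V) (hA : A.Nonempty) (hB : B.Nonempty) (hdisj : Disjoint A B)
    (hApr : A ≠ univ) (hBpr : B ≠ univ) :
    (∀ ia ⊆ A, ∀ ib ⊆ B,
        cellProb π (A ∪ B) (ia ∪ ib) = cellProb π A ia * cellProb π B ib) ↔
      (∀ A' ⊆ A, ∀ B' ⊆ B, A'.Nonempty → B'.Nonempty → gam π (A' ∪ B') = 0) :=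
  marginal_independence_iff_gamma_zero_general π hpos hsum A B hdisj
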